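/- arXiv:1904.10532 — 3 statements merged into one kernel-verified Lean document; each statement's English description precedes it below -/
import Mathlib

section
/- Let a = c₁ + c₂j and b = u₁ + u₂j be non-real split quaternions (c₁, c₂, u₁, u₂ ∈ ℂ) with a₀ ≠ b₀ and (a₀ − b₀)⁴ − 2(a₀ − b₀)²(K(a) + K(b)) + (K(a) − K(b))² = 0 (i.e. det(R(a) − L(b)) = 0). Then I_b − I_a + 2(a₀ − b₀)c̄₁ ≠ 0, and setting g = 1 − (2(a₀ − b₀)c₂ / (I_b − I_a + 2(a₀ − b₀)c̄₁)) j, a split quaternion x satisfies x a = b x if and only if there exists y ∈ ℍₛ with x = y g a − b̄ y g. -/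
open Quaternion

/-- The split quaternions: `ℍ[ℝ, -1, 1]`. -/
abbrev SplitQuaternion : Type := ℍ[ℝ, -1, 1]

/-- The imaginary unit `j` of the split quaternions. -/
def qj : SplitQuaternion := ⟨0, 0, 1, 0⟩

/-- The embedding `ℂ = ℝ + ℝi ⊂ ℍₛ`. -/
def toQ (z : ℂ) : SplitQuaternion := ⟨z.re, z.im, 0, 0⟩

/-- `I_q = q * q̄ = q₀² + q₁² − q₂² − q₃²`, as a real scalar. -/
def Iq (q : SplitQuaternion) : ℝ := q.re ^ 2 + q.imI ^ 2 - q.imJ ^ 2 - q.imK ^ 2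

/-- `K(q) = −q₁² + q₂² + q₃²`. -/
def Kq (q : SplitQuaternion) : ℝ := -q.imI ^ 2 + q.imJ ^ 2 + q.imK ^ 2

/-!
The real number `ρ = (I_a − I_b) / (2(a₀ − b₀))` is the only possible common root of the
characteristic polynomials `X² − 2a₀X + I_a` and `X² − 2b₀X + I_b`, and the determinant
condition is their resultant; so `m = a − ρ` and `n = b − ρ` are null (`I = 0`), and nonzero
because `a` and `b` are not real. The equation `x a = b x` becomes `x m = n x`, which by
`m² = 2m₀ m`, `n² = 2n₀ n` and `m₀ ≠ n₀` forces `x m = n x = 0`.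

With `z` the complex part of `m` we get `g = conj (m z⁻¹)` and `Re (m z⁻¹) = 1`, hence
`g m = 0`, and `x g = 2x` whenever `x m = 0`. The identity
`(w m − n̄ w) m − n (w m − n̄ w) = 2(m₀ − n₀) w m` shows that every `y g m − n̄ y g` is a solution.
Conversely, if `f` is the inverse of the complex part of `n` then `Re (f n) = 1`, so
`conj (f n) x = 2x` whenever `n x = 0`, and `y = −¼ f̄ x` is a preimage of a solution `x`.
-/

namespace QuaternionAlgebra

variable {R : Type*}

section CommRing

variable [CommRing R] {c₁ c₃ : R}

theorem self_add_star_of_re_eq_one {u : ℍ[R,c₁,0,c₃]} (hu : u.re = 1) : u + star u = 2 := by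
  rw [self_add_star, hu]; simp

theorem mul_star_eq_two_mul_of_mul_eq_zero {x u : ℍ[R,c₁,0,c₃]} (hu : u.re = 1)
    (h : x * u = 0) : x * star u = 2 * x := by
  calc x * star u = x * (u + star u) - x * u := by noncomm_ring
    _ = 2 * x := by rw [self_add_star_of_re_eq_one hu, h, sub_zero, mul_two, two_mul]

theorem star_mul_eq_two_mul_of_mul_eq_zero {u x : ℍ[R,c₁,0,c₃]} (hu : u.re = 1)
    (h : u * x = 0) : star u * x = 2 * x := by
  calc star u * x = (u + star u) * x - u * x := by noncomm_ring
    _ = 2 * x := by rw [self_add_star_of_re_eq_one hu, h, sub_zero]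

theorem mul_self_of_star_mul_self_eq_zero {m : ℍ[R,c₁,0,c₃]} (hm : star m * m = 0) :
    m * m = (2 * m.re) • m := by
  calc m * m = (m + star m) * m - star m * m := by noncomm_ring
    _ = (2 * m.re) • m := by rw [hm, sub_zero, self_add_star, ← coe_mul_eq_smul]; simp

theorem sub_mul_sub_mul_sub_of_star_mul_self_eq_zero {m n : ℍ[R,c₁,0,c₃]}
    (hm : star m * m = 0) (hn : star n * n = 0) (w : ℍ[R,c₁,0,c₃]) :
    (w * m - star n * w) * m - n * (w * m - star n * w) = (2 * (m.re - n.re)) • (w * m) := by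
  have hn' : n * star n = 0 := by rw [← star_comm_self', hn]
  calc (w * m - star n * w) * m - n * (w * m - star n * w)
        = w * (m * m) - (star n + n) * (w * m) + n * star n * w := by noncomm_ring
    _ = (2 * (m.re - n.re)) • (w * m) := by
      rw [mul_self_of_star_mul_self_eq_zero hm, hn', star_add_self, mul_smul_comm]
      simp [← coe_mul_eq_smul, mul_sub, sub_mul]

theorem sub_coe_ne_zero {q : ℍ[R,c₁,0,c₃]} (h : q.im ≠ 0) (r : R) : q - r ≠ 0 := by
  rw [Ne, sub_eq_zero]
  rintro rfl
  exact h (im_coe r)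

theorem mul_eq_mul_iff_sub_coe (x a b : ℍ[R,c₁,0,c₃]) (r : R) :
    x * a = b * x ↔ x * (a - r) = (b - r) * x := by
  rw [mul_sub, sub_mul, coe_commutes, sub_left_inj]

theorem mul_mul_sub_star_mul_mul_eq_sub_coe (y g a b : ℍ[R,c₁,0,c₃]) (r : R) :
    y * g * a - star b * y * g = y * g * (a - r) - star (b - r) * y * g := by
  rw [star_sub, star_coe, mul_sub, sub_mul, sub_mul, mul_assoc (r : ℍ[R,c₁,0,c₃]), coe_commutes]
  abel

end CommRing

section Field

variable [Field R] [NeZero (2 : R)] {c₁ c₃ : R}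

theorem mul_eq_zero_of_mul_eq_mul {m n x : ℍ[R,c₁,0,c₃]} (hm : star m * m = 0)
    (hn : star n * n = 0) (hre : m.re ≠ n.re) (h : x * m = n * x) : x * m = 0 := by
  have key : (2 * (m.re - n.re)) • (x * m) = 0 :=
    calc (2 * (m.re - n.re)) • (x * m)
        = x * (m * m) - n * n * x := by
          rw [mul_self_of_star_mul_self_eq_zero hm, mul_self_of_star_mul_self_eq_zero hn,
            mul_smul_comm, smul_mul_assoc, h, mul_sub, sub_smul]
      _ = 0 := by rw [← mul_assoc, h, mul_assoc, h, mul_assoc, sub_self]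
  exact (smul_eq_zero.mp key).resolve_left (mul_ne_zero two_ne_zero (sub_ne_zero.mpr hre))

theorem mul_eq_mul_iff_exists_of_star_mul_self_eq_zero {m n e f : ℍ[R,c₁,0,c₃]}
    (hm : star m * m = 0) (hn : star n * n = 0) (hre : m.re ≠ n.re)
    (he : (m * e).re = 1) (hf : (f * n).re = 1) (x : ℍ[R,c₁,0,c₃]) :
    x * m = n * x ↔ ∃ y, x = y * star (m * e) * m - star n * y * star (m * e) := by
  have hgm : star (m * e) * m = 0 := by rw [star_mul, mul_assoc, hm, mul_zero]
  constructor
  · intro h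
    have hxm : x * m = 0 := mul_eq_zero_of_mul_eq_mul hm hn hre h
    have hnx : n * x = 0 := h ▸ hxm
    have hxg : x * star (m * e) = 2 * x :=
      mul_star_eq_two_mul_of_mul_eq_zero he (by rw [← mul_assoc, hxm, zero_mul])
    have hfx : star (f * n) * x = 2 * x :=
      star_mul_eq_two_mul_of_mul_eq_zero hf (by rw [mul_assoc, hnx, mul_zero])
    have h4 : (4 : R) ≠ 0 := by
      rw [show (4 : R) = 2 * 2 by norm_num]; exact mul_ne_zero two_ne_zero two_ne_zero
    have hx : star (f * n) * (x * star (m * e)) = (4 : R) • x := by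
      rw [hxg, two_mul, mul_add, hfx, ← two_mul, ← mul_assoc, ← coe_mul_eq_smul]
      norm_num
    refine ⟨-(4⁻¹ : R) • (star f * x), ?_⟩
    calc x = (4⁻¹ : R) • (star (f * n) * (x * star (m * e))) := by
          rw [hx, smul_smul, inv_mul_cancel₀ h4, one_smul]
      _ = _ := by
          rw [mul_assoc _ _ m, hgm, mul_zero, zero_sub, star_mul f n]
          simp only [mul_assoc, smul_mul_assoc, mul_smul_comm, neg_smul, neg_mul, mul_neg, neg_neg]
  · rintro ⟨y, rfl⟩
    rw [mul_assoc (star n), ← sub_eq_zero, sub_mul_sub_mul_sub_of_star_mul_self_eq_zero hm hn,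
      mul_assoc, hgm, mul_zero, smul_zero]

end Field

end QuaternionAlgebra

namespace SplitQuaternion

theorem star_mul_self_eq_Iq (q : SplitQuaternion) : star q * q = (Iq q : SplitQuaternion) := by
  rw [QuaternionAlgebra.star_mul_eq_coe]
  congr 1
  simp only [QuaternionAlgebra.re_mul, QuaternionAlgebra.re_star, QuaternionAlgebra.imI_star,
    QuaternionAlgebra.imJ_star, QuaternionAlgebra.imK_star, Iq]
  ring

theorem Iq_sub_coe (q : SplitQuaternion) (r : ℝ) : Iq (q - r) = (q.re - r) ^ 2 - Kq q := by
  simp only [Iq, Kq, QuaternionAlgebra.re_sub, QuaternionAlgebra.re_coe, QuaternionAlgebra.imI_sub,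
    QuaternionAlgebra.imI_coe, QuaternionAlgebra.imJ_sub, QuaternionAlgebra.imJ_coe,
    QuaternionAlgebra.imK_sub, QuaternionAlgebra.imK_coe, sub_zero]
  ring

noncomputable def commonRoot (a b : SplitQuaternion) : ℝ := (Iq a - Iq b) / (2 * (a.re - b.re))

theorem two_mul_sub_re_mul_commonRoot {a b : SplitQuaternion} (hre : a.re ≠ b.re) :
    2 * (a.re - b.re) * commonRoot a b = Iq a - Iq b := by
  rw [commonRoot]; field_simp [sub_ne_zero.mpr hre]

theorem Iq_sub_Iq_add_mul_conj_eq_mul_conj_sub_commonRoot {a b : SplitQuaternion}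
    (hre : a.re ≠ b.re) (c : ℂ) :
    ((Iq b - Iq a : ℝ) : ℂ) + 2 * ((a.re - b.re : ℝ) : ℂ) * starRingEnd ℂ c =
      2 * ((a.re - b.re : ℝ) : ℂ) * starRingEnd ℂ (c - commonRoot a b) := by
  have hρ := congrArg ((↑) : ℝ → ℂ) (two_mul_sub_re_mul_commonRoot hre)
  rw [map_sub, Complex.conj_ofReal]
  push_cast at hρ ⊢
  linear_combination hρ

theorem Iq_sub_commonRoot_eq_zero {a b : SplitQuaternion} (hre : a.re ≠ b.re)
    (hdet : (a.re - b.re) ^ 4 - 2 * (a.re - b.re) ^ 2 * (Kq a + Kq b) + (Kq a - Kq b) ^ 2 = 0) :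
    Iq (a - commonRoot a b) = 0 ∧ Iq (b - commonRoot a b) = 0 := by
  have hd : a.re - b.re ≠ 0 := sub_ne_zero.mpr hre
  simp only [Iq_sub_coe, commonRoot]
  simp only [Iq, Kq] at hdet ⊢
  constructor <;> field_simp <;> linear_combination hdet

def complexPart (q : SplitQuaternion) : ℂ := ⟨q.re, q.imI⟩

theorem complexPart_toQ_add_toQ_mul_qj (z w : ℂ) : complexPart (toQ z + toQ w * qj) = z := by
  apply Complex.ext <;> simp [complexPart, toQ, qj]

theorem complexPart_ne_zero {q : SplitQuaternion} (hq : Iq q = 0) (hq0 : q ≠ 0) :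
    complexPart q ≠ 0 := by
  intro h
  have h0 : q.re = 0 ∧ q.imI = 0 := by simpa [complexPart, Complex.ext_iff] using h
  have hJ : q.imJ = 0 := by simp only [Iq, h0] at hq; nlinarith
  have hK : q.imK = 0 := by simp only [Iq, h0] at hq; nlinarith
  exact hq0 (by ext <;> simp [h0, hJ, hK])

theorem re_mul_toQ_inv_complexPart {q : SplitQuaternion} (h : complexPart q ≠ 0) :
    (q * toQ (complexPart q)⁻¹).re = 1 := by
  have hN : q.re ^ 2 + q.imI ^ 2 ≠ 0 := by
    simpa [complexPart, Complex.normSq_apply, sq] using (Complex.normSq_pos.mpr h).ne'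
  simp only [toQ, complexPart, QuaternionAlgebra.re_mul, Complex.inv_re, Complex.inv_im,
    Complex.normSq_apply]
  field_simp
  ring

theorem re_toQ_inv_complexPart_mul {q : SplitQuaternion} (h : complexPart q ≠ 0) :
    (toQ (complexPart q)⁻¹ * q).re = 1 := by
  have hN : q.re ^ 2 + q.imI ^ 2 ≠ 0 := by
    simpa [complexPart, Complex.normSq_apply, sq] using (Complex.normSq_pos.mpr h).ne'
  simp only [toQ, complexPart, QuaternionAlgebra.re_mul, Complex.inv_re, Complex.inv_im,
    Complex.normSq_apply]
  field_simp
  ring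

theorem toQ_sub_coe (z : ℂ) (r : ℝ) : toQ (z - r) = toQ z - r := by
  ext <;> simp [toQ]

theorem star_toQ_add_toQ_mul_qj_mul_toQ_inv {z : ℂ} (hz : z ≠ 0) (w : ℂ) :
    star ((toQ z + toQ w * qj) * toQ z⁻¹) = 1 - toQ (w / starRingEnd ℂ z) * qj := by
  have hN : z.re ^ 2 + z.im ^ 2 ≠ 0 := by
    simpa [Complex.normSq_apply, sq] using (Complex.normSq_pos.mpr hz).ne'
  ext <;> simp [toQ, qj, Complex.inv_re, Complex.inv_im, Complex.div_re, Complex.div_im,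
    Complex.normSq_apply] <;> field_simp <;> ring

end SplitQuaternion

open QuaternionAlgebra SplitQuaternion

theorem xa_eq_bx_solutions_distinct_re_general (c₁ c₂ : ℂ) (a b : SplitQuaternion)
    (ha : a = toQ c₁ + toQ c₂ * qj)
    (hima : a.im ≠ 0) (himb : b.im ≠ 0) (hre : a.re ≠ b.re)
    (hdet : (a.re - b.re) ^ 4 - 2 * (a.re - b.re) ^ 2 * (Kq a + Kq b) +
      (Kq a - Kq b) ^ 2 = 0) :
    ((Iq b - Iq a : ℝ) : ℂ) + 2 * ((a.re - b.re : ℝ) : ℂ) * starRingEnd ℂ c₁ ≠ 0 ∧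
      ∀ g : SplitQuaternion,
        g = 1 - toQ (2 * ((a.re - b.re : ℝ) : ℂ) * c₂ /
          (((Iq b - Iq a : ℝ) : ℂ) + 2 * ((a.re - b.re : ℝ) : ℂ) * starRingEnd ℂ c₁)) * qj →
        ∀ x : SplitQuaternion,
          x * a = b * x ↔ ∃ y : SplitQuaternion, x = y * g * a - star b * y * g := by
  set ρ := commonRoot a b
  obtain ⟨hma, hnb⟩ := Iq_sub_commonRoot_eq_zero hre hdet
  have hm : a - ρ = toQ (c₁ - ρ) + toQ c₂ * qj := by rw [toQ_sub_coe, ha]; abel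
  have hcm : complexPart (a - ρ) = c₁ - ρ := by rw [hm, complexPart_toQ_add_toQ_mul_qj]
  have hcm0 : complexPart (a - ρ) ≠ 0 := complexPart_ne_zero hma (sub_coe_ne_zero hima ρ)
  have hcn0 : complexPart (b - ρ) ≠ 0 := complexPart_ne_zero hnb (sub_coe_ne_zero himb ρ)
  have hz : c₁ - ρ ≠ 0 := hcm ▸ hcm0
  have hd : ((a.re - b.re : ℝ) : ℂ) ≠ 0 := by exact_mod_cast sub_ne_zero.mpr hre
  have hD := Iq_sub_Iq_add_mul_conj_eq_mul_conj_sub_commonRoot hre c₁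
  refine ⟨hD ▸ mul_ne_zero (mul_ne_zero two_ne_zero hd) ((map_ne_zero _).mpr hz), ?_⟩
  rintro g rfl x
  rw [hD, mul_div_mul_left _ _ (mul_ne_zero two_ne_zero hd),
    ← star_toQ_add_toQ_mul_qj_mul_toQ_inv hz, ← hm, ← hcm, mul_eq_mul_iff_sub_coe x a b ρ]
  simp_rw [mul_mul_sub_star_mul_mul_eq_sub_coe _ _ a b ρ]
  refine mul_eq_mul_iff_exists_of_star_mul_self_eq_zero ?_ ?_ ?_
    (re_mul_toQ_inv_complexPart hcm0) (re_toQ_inv_complexPart_mul hcn0) x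
  · rw [star_mul_self_eq_Iq, hma, QuaternionAlgebra.coe_zero]
  · rw [star_mul_self_eq_Iq, hnb, QuaternionAlgebra.coe_zero]
  · simpa using hre

/-- For non-real `a = c₁ + c₂j`, `b = u₁ + u₂j` with `a₀ ≠ b₀` and
`det(R(a) − L(b)) = (a₀−b₀)⁴ − 2(a₀−b₀)²(K(a)+K(b)) + (K(a)−K(b))² = 0`, the complex
number `I_b − I_a + 2(a₀−b₀)c̄₁` is nonzero, and with
`g = 1 − (2(a₀−b₀)c₂/(I_b − I_a + 2(a₀−b₀)c̄₁))j`, the solutions of `x a = b x` are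
exactly `x = y g a − b̄ y g`, `y ∈ ℍₛ`. -/
theorem xa_eq_bx_solutions_distinct_re (c₁ c₂ u₁ u₂ : ℂ) (a b : SplitQuaternion)
    (ha : a = toQ c₁ + toQ c₂ * qj) (hb : b = toQ u₁ + toQ u₂ * qj)
    (hima : a.im ≠ 0) (himb : b.im ≠ 0) (hre : a.re ≠ b.re)
    (hdet : (a.re - b.re) ^ 4 - 2 * (a.re - b.re) ^ 2 * (Kq a + Kq b) +
      (Kq a - Kq b) ^ 2 = 0) :
    ((Iq b - Iq a : ℝ) : ℂ) + 2 * ((a.re - b.re : ℝ) : ℂ) * starRingEnd ℂ c₁ ≠ 0 ∧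
      ∀ g : SplitQuaternion,
        g = 1 - toQ (2 * ((a.re - b.re : ℝ) : ℂ) * c₂ /
          (((Iq b - Iq a : ℝ) : ℂ) + 2 * ((a.re - b.re : ℝ) : ℂ) * starRingEnd ℂ c₁)) * qj →
        ∀ x : SplitQuaternion,
          x * a = b * x ↔ ∃ y : SplitQuaternion, x = y * g * a - star b * y * g :=
  xa_eq_bx_solutions_distinct_re_general c₁ c₂ a b ha hima himb hre hdet
end

section
/- For every non-real split quaternion a = a₀ + a₁i + a₂j + a₃k ∈ ℍₛ there exists q ∈ ℍₛ with I_q ≠ 0 such that: q a = (a₀ + √(K(a)) · j) q if K(a) > 0; q a = (a₀ + √(−K(a)) · i) q if K(a) < 0; and q a = (a₀ + i + j) q if K(a) = 0. (Equivalently, q a q⁻¹ equals the stated canonical form.) -/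
/-!
If `u * u = v * v` in any ring, then `q = u + v` satisfies `q u = v q`, and so does
`q = w (u - v)` whenever `w` anticommutes with `v`. Since real scalars are central, it suffices to
conjugate the imaginary part `u` of `a` to the imaginary part `v` of the canonical form, and both
square to the scalar `K(a)`. When `K(a) ≠ 0`, the parallelogram law gives
`I(u + v) + I(u - v) = -4 K(a)`, so one of `u + v` and `w (u - v)` is invertible (take `w = i` or
`j`, of norm `±1`). When `K(a) = 0`, `u + v` is invertible unless `u` is a real multiple of
`v = i + j`, and such a multiple is conjugated to `v` by an explicit element `α + β k`.
-/

open Quaternion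

/-- The imaginary unit `i` of the split quaternions. -/
def qi : SplitQuaternion := ⟨0, 1, 0, 0⟩

section Ring
variable {R : Type*} [Ring R] {u v w : R}

theorem add_mul_eq_mul_add_of_mul_self_eq (h : u * u = v * v) : (u + v) * u = v * (u + v) := by
  rw [add_mul, mul_add, h, add_comm]

theorem mul_sub_mul_eq_mul_mul_sub_of_mul_self_eq (h : u * u = v * v) (hw : w * v = -(v * w)) :
    w * (u - v) * u = v * (w * (u - v)) := by
  have : (u - v) * u = -v * (u - v) := by
    rw [sub_mul, neg_mul, mul_sub, h]
    abel
  rw [mul_assoc, this, ← mul_assoc, mul_neg, hw, neg_neg, mul_assoc]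

end Ring

namespace SplitQuaternion

theorem Iq_mul (p q : SplitQuaternion) : Iq (p * q) = Iq p * Iq q := by
  simp only [Iq, QuaternionAlgebra.re_mul, QuaternionAlgebra.imI_mul,
    QuaternionAlgebra.imJ_mul, QuaternionAlgebra.imK_mul]
  ring

theorem Iq_add_add_Iq_sub (p q : SplitQuaternion) :
    Iq (p + q) + Iq (p - q) = 2 * (Iq p + Iq q) := by
  simp only [Iq, QuaternionAlgebra.re_add, QuaternionAlgebra.imI_add, QuaternionAlgebra.imJ_add,
    QuaternionAlgebra.imK_add, QuaternionAlgebra.re_sub, QuaternionAlgebra.imI_sub,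
    QuaternionAlgebra.imJ_sub, QuaternionAlgebra.imK_sub]
  ring

theorem Iq_eq_re_sq_sub_Kq (q : SplitQuaternion) : Iq q = q.re ^ 2 - Kq q := by
  simp only [Iq, Kq]; ring

@[simp] theorem Kq_im (q : SplitQuaternion) : Kq q.im = Kq q := rfl

theorem im_mul_im (q : SplitQuaternion) : q.im * q.im = (Kq q : SplitQuaternion) := by
  ext <;>
    simp [Kq, -QuaternionAlgebra.coe_add, -QuaternionAlgebra.coe_neg, -QuaternionAlgebra.coe_pow] <;>
    ring

theorem mul_eq_add_mul_of_mul_im_eq {q a b : SplitQuaternion} (h : q * a.im = b * q) :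
    q * a = (a.re + b) * q := by
  conv_lhs => rw [← QuaternionAlgebra.re_add_im a]
  rw [mul_add, h, add_mul, QuaternionAlgebra.coe_commutes]

theorem Kq_smul_qi (t : ℝ) : Kq (t • qi) = -t ^ 2 := by simp [Kq, qi]

theorem Kq_smul_qj (t : ℝ) : Kq (t • qj) = t ^ 2 := by simp [Kq, qj]

theorem exists_conj_im_of_Kq_ne_zero {a v w : SplitQuaternion} (hK : Kq a ≠ 0) (hv : v.im = v)
    (hKv : Kq v = Kq a) (hw : w * v = -(v * w)) (hIw : Iq w ≠ 0) :
    ∃ q, Iq q ≠ 0 ∧ q * a.im = v * q := by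
  have hsq : a.im * a.im = v * v := by rw [← hv, im_mul_im, im_mul_im, hKv]
  have hsum : Iq (a.im + v) + Iq (a.im - v) = -4 * Kq a := by
    rw [Iq_add_add_Iq_sub, Iq_eq_re_sq_sub_Kq, Iq_eq_re_sq_sub_Kq v, ← hv, Kq_im, Kq_im, hKv]
    simp only [QuaternionAlgebra.re_im]
    ring
  by_cases h : Iq (a.im + v) = 0
  · refine ⟨w * (a.im - v), ?_, mul_sub_mul_eq_mul_mul_sub_of_mul_self_eq hsq hw⟩
    rw [Iq_mul]
    exact mul_ne_zero hIw fun h' => hK (by linarith)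
  · exact ⟨a.im + v, h, add_mul_eq_mul_add_of_mul_self_eq hsq⟩

/- `k` fixes `i + j` under left multiplication and negates it under right multiplication, so
`(α + β k) (i + j) = (α + β) (i + j)` and `(i + j) (α + β k) = (α - β) (i + j)`; the witness
takes `α + β = -2`, `α - β = -2t`. -/
theorem exists_conj_smul_qi_add_qj {t : ℝ} (ht : t ≠ 0) :
    ∃ q, Iq q ≠ 0 ∧ q * (t • (qi + qj)) = (qi + qj) * q := by
  refine ⟨⟨-(t + 1), 0, 0, t - 1⟩, ?_, ?_⟩
  · have : Iq ⟨-(t + 1), 0, 0, t - 1⟩ = 4 * t := by simp only [Iq]; ring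
    rw [this]
    positivity
  · ext <;> simp [qi, qj] <;> ring

theorem exists_conj_im_of_Kq_eq_zero {a : SplitQuaternion} (ha : a.im ≠ 0) (hK : Kq a = 0) :
    ∃ q, Iq q ≠ 0 ∧ q * a.im = (qi + qj) * q := by
  have hsq : a.im * a.im = (qi + qj) * (qi + qj) := by
    rw [im_mul_im, hK]; ext <;> simp [qi, qj]
  by_cases h : a.imI = a.imJ
  · have hk : a.imK = 0 := by simp only [Kq] at hK; rw [h] at hK; nlinarith
    have hsmul : a.im = a.imI • (qi + qj) := by ext <;> simp [qi, qj, h, hk]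
    have hI : a.imI ≠ 0 := fun h0 => ha (by rw [hsmul, h0, zero_smul])
    rw [hsmul]
    exact exists_conj_smul_qi_add_qj hI
  · refine ⟨a.im + (qi + qj), ?_, add_mul_eq_mul_add_of_mul_self_eq hsq⟩
    have : Iq (a.im + (qi + qj)) = 2 * (a.imI - a.imJ) := by
      rw [Kq] at hK
      simp [Iq, qi, qj]
      linear_combination -hK
    rw [this]
    exact mul_ne_zero two_ne_zero (sub_ne_zero.mpr h)

end SplitQuaternion

open SplitQuaternion

/-- Every non-real split quaternion `a` is similar (via some invertible `q`, i.e. with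
`I_q ≠ 0`) to `a₀ + √(K(a))·j` if `K(a) > 0`, to `a₀ + √(−K(a))·i` if `K(a) < 0`, and to
`a₀ + i + j` if `K(a) = 0`. -/
theorem similar_canonical_form (a : SplitQuaternion) (ha : a.im ≠ 0) :
    ∃ q : SplitQuaternion, Iq q ≠ 0 ∧
      (0 < Kq a → q * a = (((a.re : ℝ) : SplitQuaternion) + Real.sqrt (Kq a) • qj) * q) ∧
      (Kq a < 0 → q * a = (((a.re : ℝ) : SplitQuaternion) + Real.sqrt (-Kq a) • qi) * q) ∧
      (Kq a = 0 → q * a = (((a.re : ℝ) : SplitQuaternion) + qi + qj) * q) := by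
  rcases lt_trichotomy (Kq a) 0 with hK | hK | hK
  · obtain ⟨q, hq, hconj⟩ := exists_conj_im_of_Kq_ne_zero (v := √(-Kq a) • qi) (w := qj) hK.ne
      (by ext <;> simp [qi]) (by rw [Kq_smul_qi, Real.sq_sqrt (neg_nonneg.mpr hK.le), neg_neg])
      (by ext <;> simp [qi, qj]) (by norm_num [Iq, qj])
    exact ⟨q, hq, fun h => absurd h hK.not_gt, fun _ => mul_eq_add_mul_of_mul_im_eq hconj,
      fun h => absurd h hK.ne⟩
  · obtain ⟨q, hq, hconj⟩ := exists_conj_im_of_Kq_eq_zero ha hK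
    refine ⟨q, hq, fun h => absurd h hK.not_gt, fun h => absurd h hK.not_lt, fun _ => ?_⟩
    rw [add_assoc]
    exact mul_eq_add_mul_of_mul_im_eq hconj
  · obtain ⟨q, hq, hconj⟩ := exists_conj_im_of_Kq_ne_zero (v := √(Kq a) • qj) (w := qi) hK.ne'
      (by ext <;> simp [qj]) (by rw [Kq_smul_qj, Real.sq_sqrt hK.le])
      (by ext <;> simp [qi, qj]) (by norm_num [Iq, qi])
    exact ⟨q, hq, fun _ => mul_eq_add_mul_of_mul_im_eq hconj, fun h => absurd h hK.not_gt,
      fun h => absurd h hK.ne'⟩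
end

section
/- Two non-real split quaternions a, b ∈ ℍₛ are consimilar — i.e. there exists x ∈ ℍₛ with I_x ≠ 0 and x a = b x̄ — if and only if ā + b = 0, or (I_a = I_b and I_{ā + b} ≠ 0). -/
open Quaternion

/-!
Taking `I` of `x a = b x̄` gives `I_a = I_b`, as `I` is multiplicative. With `c = ā + b`,
the equation gives `c x̄ = x a + conj (x a)`, a real number `r`; then `I_c I_x = r²`, so
`I_c = 0` forces `r = 0`, and `c = 0` because `x̄` is invertible. Conversely, `x = ā + b`
works when `I_a = I_b` (both sides equal `b a + I_a`), and for `b = -ā` the equation says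
`Re (x a) = 0`, solved by `x = 1` or `x = a₁ + a₀ i`.
-/

theorem Iq_star (q : SplitQuaternion) : Iq (star q) = Iq q := by
  simp [Iq]

theorem Iq_mul (p q : SplitQuaternion) : Iq (p * q) = Iq p * Iq q := by
  simp only [Iq, QuaternionAlgebra.re_mul, QuaternionAlgebra.imI_mul, QuaternionAlgebra.imJ_mul,
    QuaternionAlgebra.imK_mul]
  ring

theorem Iq_coe (r : ℝ) : Iq r = r ^ 2 := by
  simp [Iq]

theorem star_mul_self_eq_Iq (q : SplitQuaternion) : star q * q = (Iq q : SplitQuaternion) := by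
  rw [QuaternionAlgebra.star_mul_eq_coe, Iq]
  congr 1
  simp only [QuaternionAlgebra.re_mul, QuaternionAlgebra.re_star, QuaternionAlgebra.imI_star,
    QuaternionAlgebra.imJ_star, QuaternionAlgebra.imK_star]
  ring

theorem mul_star_self_eq_Iq (q : SplitQuaternion) : q * star q = (Iq q : SplitQuaternion) := by
  simpa [Iq_star] using star_mul_self_eq_Iq (star q)

theorem isUnit_of_Iq_ne_zero {x : SplitQuaternion} (hx : Iq x ≠ 0) : IsUnit x := by
  refine ⟨⟨x, (Iq x)⁻¹ • star x, ?_, ?_⟩, rfl⟩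
  · rw [mul_smul_comm, mul_star_self_eq_Iq, QuaternionAlgebra.smul_coe, inv_mul_cancel₀ hx,
      QuaternionAlgebra.coe_one]
  · rw [smul_mul_assoc, star_mul_self_eq_Iq, QuaternionAlgebra.smul_coe, inv_mul_cancel₀ hx,
      QuaternionAlgebra.coe_one]

section Consimilarity

variable {x a b : SplitQuaternion}

theorem Iq_eq_of_mul_eq_mul_star (hx : Iq x ≠ 0) (h : x * a = b * star x) : Iq a = Iq b := by
  have hI := congrArg Iq h
  rw [Iq_mul, Iq_mul, Iq_star, mul_comm (Iq b)] at hI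
  exact mul_left_cancel₀ hx hI

theorem star_add_mul_star_eq_coe (h : x * a = b * star x) :
    (star a + b) * star x = ((2 * (x * a).re : ℝ) : SplitQuaternion) := by
  rw [add_mul, ← h, ← star_mul, QuaternionAlgebra.star_add_self', zero_mul, add_zero]

theorem star_add_eq_zero_of_mul_eq_mul_star (hx : Iq x ≠ 0) (h : x * a = b * star x)
    (hc : Iq (star a + b) = 0) : star a + b = 0 := by
  have hprod := star_add_mul_star_eq_coe h
  have hre : (x * a).re = 0 := by
    have hI := congrArg Iq hprod
    rw [Iq_mul, hc, zero_mul, Iq_coe] at hI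
    simpa using hI.symm
  rw [hre, mul_zero, QuaternionAlgebra.coe_zero] at hprod
  exact (isUnit_of_Iq_ne_zero (by rwa [Iq_star])).mul_left_eq_zero.mp hprod

theorem mul_eq_neg_star_mul_star_iff : x * a = -star a * star x ↔ (x * a).re = 0 := by
  rw [neg_mul, ← star_mul, eq_neg_iff_add_eq_zero, QuaternionAlgebra.self_add_star', zero_mul,
    add_zero, ← QuaternionAlgebra.coe_zero, QuaternionAlgebra.coe_inj, mul_eq_zero,
    or_iff_right two_ne_zero]

theorem star_add_mul_eq_mul_star_star_add (hI : Iq a = Iq b) :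
    (star a + b) * a = b * star (star a + b) := by
  rw [star_add, star_star, add_mul, mul_add, star_mul_self_eq_Iq, mul_star_self_eq_Iq, hI,
    add_comm]

end Consimilarity

theorem exists_Iq_ne_zero_re_mul_eq_zero (a : SplitQuaternion) :
    ∃ x : SplitQuaternion, Iq x ≠ 0 ∧ (x * a).re = 0 := by
  by_cases ha : a.re = 0
  · exact ⟨1, by simp [Iq], by simpa using ha⟩
  · refine ⟨⟨a.imI, a.re, 0, 0⟩, ?_, ?_⟩
    · have : 0 < a.re ^ 2 := by positivity
      simp only [Iq]
      nlinarith [sq_nonneg a.imI]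
    · simp only [QuaternionAlgebra.re_mul]
      ring

theorem consimilar_iff_general (a b : SplitQuaternion) :
    (∃ x : SplitQuaternion, Iq x ≠ 0 ∧ x * a = b * star x) ↔
      (star a + b = 0 ∨ (Iq a = Iq b ∧ Iq (star a + b) ≠ 0)) := by
  constructor
  · rintro ⟨x, hx, hxa⟩
    by_cases hc : Iq (star a + b) = 0
    · exact Or.inl (star_add_eq_zero_of_mul_eq_mul_star hx hxa hc)
    · exact Or.inr ⟨Iq_eq_of_mul_eq_mul_star hx hxa, hc⟩
  · rintro (h | ⟨hI, hc⟩)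
    · obtain ⟨x, hx, hre⟩ := exists_Iq_ne_zero_re_mul_eq_zero a
      refine ⟨x, hx, ?_⟩
      rwa [eq_neg_of_add_eq_zero_right h, mul_eq_neg_star_mul_star_iff]
    · exact ⟨star a + b, hc, star_add_mul_eq_mul_star_star_add hI⟩

/-- Two non-real split quaternions `a, b` are consimilar (`x a = b x̄` for some
invertible `x`, i.e. with `I_x ≠ 0`) if and only if `ā + b = 0`, or `I_a = I_b` and
`I_{ā+b} ≠ 0`. -/
theorem consimilar_iff (a b : SplitQuaternion) (ha : a.im ≠ 0) (hb : b.im ≠ 0) :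
    (∃ x : SplitQuaternion, Iq x ≠ 0 ∧ x * a = b * star x) ↔
      (star a + b = 0 ∨ (Iq a = Iq b ∧ Iq (star a + b) ≠ 0)) :=
  consimilar_iff_general a b
end
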